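/- A real Banach space X is 1-projective if and only if every closed subspace Y of X admits a weak*-closed subspace Z of X* that is norm-attaining for Y and satisfies Y^⊥ ∩ Z = {0}. -/

import Mathlib

/-- A subspace `Z` of the dual of `X` is **weak*-closed** if its image in `WeakDual ℝ X`
is closed in the weak-* topology. -/
def WeakStarClosed {X : Type*} [NormedAddCommGroup X] [NormedSpace ℝ X]
    (Z : Submodule ℝ (X →L[ℝ] ℝ)) : Prop :=
  IsClosed (StrongDual.toWeakDual '' (Z : Set (X →L[ℝ] ℝ)) : Set (WeakDual ℝ X))

/-- `Z ⊆ X*` is **norm-attaining for** the subspace `Y ⊆ X` if every norm-one element of `Y`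
is sent to `1` by some norm-one functional in `Z`. -/
def NormAttainingFor {X : Type*} [NormedAddCommGroup X] [NormedSpace ℝ X]
    (Y : Submodule ℝ X) (Z : Submodule ℝ (X →L[ℝ] ℝ)) : Prop :=
  ∀ y ∈ Y, ‖y‖ = 1 → ∃ f ∈ Z, ‖f‖ = 1 ∧ f y = 1

/-- A real Banach space `X` is **1-projective** if every closed subspace of `X` is the range
of a continuous linear projection of norm at most `1`. -/
def OneProjective (X : Type*) [NormedAddCommGroup X] [NormedSpace ℝ X] : Prop :=
  ∀ (Y : Submodule ℝ X), IsClosed (Y : Set X) →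
    ∃ P : X →L[ℝ] X, (∀ x, P (P x) = P x) ∧ ‖P‖ ≤ 1 ∧ LinearMap.range (P : X →ₗ[ℝ] X) = Y

/-!
If `P` is a projection of norm at most one onto `Y`, take `Z` to be the annihilator of `ker P`:
it is weak*-closed, meets `Y^⊥` only in `0` because `X = Y + ker P`, and it is norm-attaining
for `Y` since it contains `g ∘ P` for every norming functional `g` of a point of `Y`.

Conversely, let `N` be the pre-annihilator of `Z`. Norm-attainment gives `‖y‖ ≤ ‖y + n‖` for
`y ∈ Y`, `n ∈ N`, so the quotient map `X → X ⧸ N` is isometric on `Y` and its image is closed.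
By the bipolar theorem `N^⊥ = Z`, so a functional on `X ⧸ N` vanishing on the image of `Y` comes
from `Z ∩ Y^⊥ = 0`; hence `Y ≅ X ⧸ N` isometrically, and `Y ↪ X` composed with the inverse of
this isometry and the quotient map is a projection of norm at most one onto `Y`.
-/

section

variable {X : Type*} [NormedAddCommGroup X] [NormedSpace ℝ X]

theorem Submodule.exists_strongDual_apply_ne_zero_of_notMem {E : Type*} [AddCommGroup E]
    [Module ℝ E] [TopologicalSpace E] [IsTopologicalAddGroup E] [ContinuousSMul ℝ E]
    [LocallyConvexSpace ℝ E] {p : Submodule ℝ E} (hp : IsClosed (p : Set E)) {x : E}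
    (hx : x ∉ p) : ∃ f : StrongDual ℝ E, f x ≠ 0 ∧ ∀ y ∈ p, f y = 0 := by
  obtain ⟨f, u, hfp, hux⟩ := geometric_hahn_banach_closed_point p.convex hp hx
  have hu : 0 < u := by simpa using hfp 0 p.zero_mem
  -- `f` is bounded above on the submodule `p`, so it vanishes there
  have hvanish : ∀ y ∈ p, f y = 0 := fun y hy => by
    by_contra hfy
    have := hfp _ (p.smul_mem (u / f y) hy)
    rw [map_smul, smul_eq_mul, div_mul_cancel₀ _ hfy] at this
    exact lt_irrefl _ this
  exact ⟨f, by linarith, hvanish⟩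

theorem mem_polarSubmodule_topDualPairing {Z : Submodule ℝ (StrongDual ℝ X)} {x : X} :
    x ∈ (topDualPairing ℝ X).polarSubmodule Z ↔ ∀ f ∈ Z, f x = 0 := by
  show x ∈ (topDualPairing ℝ X).polar Z ↔ _
  rw [LinearMap.polar_subMulAction]
  rfl

theorem isClosed_polarSubmodule_topDualPairing (Z : Submodule ℝ (StrongDual ℝ X)) :
    IsClosed ((topDualPairing ℝ X).polarSubmodule Z : Set X) := by
  have hset : ((topDualPairing ℝ X).polarSubmodule Z : Set X) = ⋂ f ∈ Z, {x | f x = 0} := by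
    ext x
    simp only [SetLike.mem_coe, mem_polarSubmodule_topDualPairing, Set.mem_iInter,
      Set.mem_ofPred_eq]
  rw [hset]
  exact isClosed_biInter fun f _ => isClosed_eq f.continuous continuous_const

theorem weakStarClosed_polarSubmodule (S : Submodule ℝ X) :
    WeakStarClosed (StrongDual.polarSubmodule ℝ S) := by
  have himage : StrongDual.toWeakDual '' (StrongDual.polarSubmodule ℝ S : Set (StrongDual ℝ X)) =
      ⋂ x ∈ S, {g : WeakDual ℝ X | g x = 0} := by
    ext g
    simp only [Set.mem_iInter, Set.mem_ofPred_eq]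
    exact ⟨by rintro ⟨f, hf, rfl⟩; exact (StrongDual.mem_polarSubmodule ℝ S f).1 hf,
      fun hg => ⟨g, (StrongDual.mem_polarSubmodule ℝ S g).2 hg, rfl⟩⟩
  unfold WeakStarClosed
  rw [himage]
  exact isClosed_biInter fun x _ => isClosed_eq (WeakDual.eval_continuous x) continuous_const

theorem WeakStarClosed.polarSubmodule_polarSubmodule_le {Z : Submodule ℝ (StrongDual ℝ X)}
    (hZ : WeakStarClosed Z) :
    StrongDual.polarSubmodule ℝ ((topDualPairing ℝ X).polarSubmodule Z) ≤ Z := by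
  intro f hf
  by_contra hfZ
  have : LocallyConvexSpace ℝ (WeakDual ℝ X) := WeakBilin.locallyConvexSpace
  let W : Submodule ℝ (WeakDual ℝ X) := Z.map StrongDual.toWeakDual.toLinearMap
  have hW : IsClosed (W : Set (WeakDual ℝ X)) := hZ
  have hfW : StrongDual.toWeakDual f ∉ W := by simpa [W] using hfZ
  obtain ⟨φ, hφf, hφW⟩ := W.exists_strongDual_apply_ne_zero_of_notMem hW hfW
  -- continuous functionals on the weak-* dual are evaluations at points of `X`
  obtain ⟨x, rfl⟩ := LinearMap.dualEmbedding_surjective (topDualPairing ℝ X) φ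
  have hx : x ∈ (topDualPairing ℝ X).polarSubmodule Z :=
    mem_polarSubmodule_topDualPairing.2 fun g hg => hφW _ (Submodule.mem_map_of_mem hg)
  exact hφf ((StrongDual.mem_polarSubmodule ℝ _ f).1 hf x hx)

theorem normAttainingFor_polarSubmodule_ker {Y : Submodule ℝ X} {P : X →L[ℝ] X}
    (hP : ‖P‖ ≤ 1) (hPY : ∀ y ∈ Y, P y = y) :
    NormAttainingFor Y (StrongDual.polarSubmodule ℝ (LinearMap.ker (P : X →ₗ[ℝ] X))) := by
  intro y hy hy1
  obtain ⟨g, hg, hgy⟩ := exists_dual_vector ℝ y (by simp [hy1])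
  have hgPy : g.comp P y = 1 := by simp [hPY y hy, hgy, hy1]
  have hmem : g.comp P ∈ StrongDual.polarSubmodule ℝ (LinearMap.ker (P : X →ₗ[ℝ] X)) :=
    (StrongDual.mem_polarSubmodule ℝ _ _).2 fun x hx => by
      rw [ContinuousLinearMap.comp_apply, show P x = 0 from hx, map_zero]
  refine ⟨g.comp P, hmem, le_antisymm ?_ ?_, hgPy⟩
  · calc ‖g.comp P‖ ≤ ‖g‖ * ‖P‖ := g.opNorm_comp_le P
      _ ≤ 1 := by rw [hg, one_mul]; exact hP
  · calc (1 : ℝ) = ‖g.comp P y‖ := by simp [hgPy]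
      _ ≤ ‖g.comp P‖ * ‖y‖ := (g.comp P).le_opNorm y
      _ = ‖g.comp P‖ := by rw [hy1, mul_one]

theorem eq_zero_of_mem_polarSubmodule_ker {P : X →L[ℝ] X} (hP : ∀ x, P (P x) = P x)
    {f : StrongDual ℝ X} (hf : f ∈ StrongDual.polarSubmodule ℝ (LinearMap.ker (P : X →ₗ[ℝ] X)))
    (hfP : ∀ x, f (P x) = 0) : f = 0 := by
  ext x
  have hker : x - P x ∈ LinearMap.ker (P : X →ₗ[ℝ] X) := by simp [hP]
  simpa [hfP] using (StrongDual.mem_polarSubmodule ℝ _ f).1 hf _ hker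

theorem NormAttainingFor.norm_le_norm_add {Y : Submodule ℝ X}
    {Z : Submodule ℝ (StrongDual ℝ X)} (hZ : NormAttainingFor Y Z) {y n : X} (hy : y ∈ Y)
    (hn : n ∈ (topDualPairing ℝ X).polarSubmodule Z) : ‖y‖ ≤ ‖y + n‖ := by
  rcases eq_or_ne y 0 with rfl | hy0
  · simp
  obtain ⟨f, hfZ, hf1, hfy⟩ :=
    hZ (‖y‖⁻¹ • y) (Y.smul_mem _ hy) (norm_smul_inv_norm (𝕜 := ℝ) hy0)
  have hfy' : f y = ‖y‖ := by
    rw [map_smul, smul_eq_mul, inv_mul_eq_one₀ (norm_ne_zero_iff.2 hy0)] at hfy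
    exact hfy.symm
  calc ‖y‖ = f (y + n) := by
        rw [map_add, mem_polarSubmodule_topDualPairing.1 hn f hfZ, add_zero, hfy']
    _ ≤ ‖f‖ * ‖y + n‖ := (le_abs_self _).trans (f.le_opNorm _)
    _ = ‖y + n‖ := by rw [hf1, one_mul]

theorem Submodule.Quotient.norm_mk_eq_norm {N : Submodule ℝ X} {y : X}
    (h : ∀ n ∈ N, ‖y‖ ≤ ‖y + n‖) : ‖(Submodule.Quotient.mk y : X ⧸ N)‖ = ‖y‖ := by
  refine le_antisymm (Submodule.Quotient.norm_mk_le N y) ?_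
  rw [show ‖(Submodule.Quotient.mk y : X ⧸ N)‖ = Metric.infDist y N from
    QuotientAddGroup.norm_mk (S := N.toAddSubgroup) y, Metric.le_infDist ⟨0, N.zero_mem⟩]
  intro n hn
  simpa [dist_eq_norm, sub_eq_add_neg] using h (-n) (N.neg_mem hn)

theorem LinearIsometry.surjective_of_forall_strongDual {E F : Type*} [NormedAddCommGroup E]
    [NormedSpace ℝ E] [CompleteSpace E] [NormedAddCommGroup F] [NormedSpace ℝ F]
    (j : E →ₗᵢ[ℝ] F) (h : ∀ g : StrongDual ℝ F, (∀ x, g (j x) = 0) → g = 0) :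
    Function.Surjective j := by
  intro z
  by_contra hz
  have hclosed : IsClosed (LinearMap.range j.toLinearMap : Set F) :=
    j.isometry.isClosedEmbedding.isClosed_range
  obtain ⟨g, hgz, hg⟩ := (LinearMap.range j.toLinearMap).exists_strongDual_apply_ne_zero_of_notMem
    hclosed (by simpa using hz)
  exact hgz (by rw [h g fun x => hg _ ⟨x, rfl⟩, zero_apply])

theorem exists_projection_of_norm_le_norm_add [CompleteSpace X] {Y N : Submodule ℝ X}
    (hY : IsClosed (Y : Set X)) (hN : IsClosed (N : Set X))
    (hnorm : ∀ y ∈ Y, ∀ n ∈ N, ‖y‖ ≤ ‖y + n‖)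
    (hsep : ∀ f : StrongDual ℝ X, (∀ y ∈ Y, f y = 0) → (∀ n ∈ N, f n = 0) → f = 0) :
    ∃ P : X →L[ℝ] X, (∀ x, P (P x) = P x) ∧ ‖P‖ ≤ 1 ∧ LinearMap.range (P : X →ₗ[ℝ] X) = Y := by
  have : CompleteSpace Y := hY.completeSpace_coe
  let j : Y →ₗᵢ[ℝ] X ⧸ N :=
    { toLinearMap := N.mkQ ∘ₗ Y.subtype
      norm_map' := fun y => Submodule.Quotient.norm_mk_eq_norm (hnorm y y.2) }
  have hj : Function.Surjective j := j.surjective_of_forall_strongDual fun g hg => by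
    have hgq : g.comp N.mkQL = 0 := hsep _ (fun y hy => hg ⟨y, hy⟩)
      (fun n hn => by simp [(Submodule.Quotient.mk_eq_zero N).2 hn])
    ext z
    obtain ⟨x, rfl⟩ := N.mkQ_surjective z
    exact congr($hgq x)
  let e := LinearIsometryEquiv.ofSurjective j hj
  let P : X →L[ℝ] X := Y.subtypeL ∘L (e.symm : X ⧸ N →L[ℝ] Y) ∘L N.mkQL
  have hPY : ∀ y ∈ Y, P y = y := fun y hy => by
    have : e.symm (N.mkQ y) = ⟨y, hy⟩ := e.symm_apply_eq.2 rfl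
    exact congr(Subtype.val $this)
  have hPX : ∀ x, P x ∈ Y := fun x => (e.symm (N.mkQ x)).2
  refine ⟨P, fun x => hPY _ (hPX x), ?_, ?_⟩
  · refine P.opNorm_le_bound zero_le_one fun x => ?_
    calc ‖P x‖ = ‖N.mkQ x‖ := e.symm.norm_map _
      _ ≤ 1 * ‖x‖ := by rw [one_mul]; exact Submodule.Quotient.norm_mk_le N x
  · refine le_antisymm ?_ fun y hy => ⟨y, hPY y hy⟩
    rintro _ ⟨x, rfl⟩
    exact hPX x

end

theorem oneProjective_iff_normAttainingFor (X : Type*) [NormedAddCommGroup X]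
    [NormedSpace ℝ X] [CompleteSpace X] :
    OneProjective X ↔
      ∀ Y : Submodule ℝ X, IsClosed (Y : Set X) →
        ∃ Z : Submodule ℝ (X →L[ℝ] ℝ), WeakStarClosed Z ∧ NormAttainingFor Y Z ∧
          ∀ f ∈ Z, (∀ y ∈ Y, f y = 0) → f = 0 := by
  constructor
  · intro hX Y hY
    obtain ⟨P, hPP, hP1, hPrange⟩ := hX Y hY
    have hPY : ∀ y ∈ Y, P y = y := by
      intro y hy
      obtain ⟨x, rfl⟩ := hPrange ▸ hy
      exact hPP x
    refine ⟨StrongDual.polarSubmodule ℝ (LinearMap.ker (P : X →ₗ[ℝ] X)),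
      weakStarClosed_polarSubmodule _, normAttainingFor_polarSubmodule_ker hP1 hPY,
      fun f hf hfY => eq_zero_of_mem_polarSubmodule_ker hPP hf fun x => hfY _ ?_⟩
    exact hPrange ▸ LinearMap.mem_range_self _ x
  · intro h Y hY
    obtain ⟨Z, hZ, hna, hann⟩ := h Y hY
    refine exists_projection_of_norm_le_norm_add hY (isClosed_polarSubmodule_topDualPairing Z)
      (fun y hy n hn => hna.norm_le_norm_add hy hn) fun f hfY hfN => hann f ?_ hfY
    exact hZ.polarSubmodule_polarSubmodule_le ((StrongDual.mem_polarSubmodule ℝ _ f).2 hfN)
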